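/- For the ferromagnetic Ising model with zero field on a finite graph, the spin correlation ⟨σ_A⟩ is non-decreasing in the inverse temperature β: if 0 ≤ β₁ ≤ β₂ then ⟨σ_A⟩_{β₁} ≤ ⟨σ_A⟩_{β₂}, for any A ⊆ V. -/
import Mathlib


open Finset

/-- The spin value attached to a Boolean: `+1` or `-1`. -/
noncomputable def spin (b : Bool) : ℝ := if b then 1 else -1

/-- Interaction energy `Σ_{{x,y}∈E} σ_x σ_y` of a spin configuration. -/
noncomputable def interaction {V : Type*} [Fintype V] [DecidableEq V]
    (G : SimpleGraph V) [DecidableRel G.Adj] (σ : V → Bool) : ℝ :=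
  ∑ e ∈ G.edgeFinset,
    Sym2.lift ⟨fun x y => spin (σ x) * spin (σ y), fun _ _ => by ring⟩ e

/-- The Ising expectation `⟨X⟩_β` at zero magnetic field on the finite graph `G`. -/
noncomputable def isingExpect {V : Type*} [Fintype V] [DecidableEq V]
    (G : SimpleGraph V) [DecidableRel G.Adj] (β : ℝ) (X : (V → Bool) → ℝ) : ℝ :=
  (∑ σ : V → Bool, X σ * Real.exp (β * interaction G σ)) /
    (∑ σ : V → Bool, Real.exp (β * interaction G σ))

namespace IsingAux

variable {V : Type*} [Fintype V] [DecidableEq V]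

/-- The edge spin `σ_x σ_y` as a function on `Sym2 V`. -/
noncomputable def sfun (σ : V → Bool) : Sym2 V → ℝ :=
  Sym2.lift ⟨fun x y => spin (σ x) * spin (σ y), fun _ _ => by ring⟩

lemma spin_mul_self (b : Bool) : spin b * spin b = 1 := by cases b <;> norm_num [spin]

lemma spin_eq (b : Bool) : spin b = 1 ∨ spin b = -1 := by cases b <;> simp [spin]

lemma spin_beq (a b : Bool) : spin (a == b) = spin a * spin b := by
  cases a <;> cases b <;> norm_num [spin]

lemma sfun_mk (σ : V → Bool) (x y : V) : sfun σ s(x, y) = spin (σ x) * spin (σ y) := rfl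

lemma sfun_eq (σ : V → Bool) (e : Sym2 V) : sfun σ e = 1 ∨ sfun σ e = -1 := by
  induction e using Sym2.ind with
  | _ x y =>
    rw [sfun_mk]
    rcases spin_eq (σ x) with h1 | h1 <;> rcases spin_eq (σ y) with h2 | h2 <;>
      rw [h1, h2] <;> norm_num

lemma sfun_beq (σ ω : V → Bool) (e : Sym2 V) :
    sfun (fun x => σ x == ω x) e = sfun σ e * sfun ω e := by
  induction e using Sym2.ind with
  | _ x y => simp only [sfun_mk, spin_beq]; ring

lemma interaction_eq (G : SimpleGraph V) [DecidableRel G.Adj] (σ : V → Bool) :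
    interaction G σ = ∑ e ∈ G.edgeFinset, sfun σ e := rfl

lemma prodSpin_sq (A : Finset V) (σ : V → Bool) :
    (∏ x ∈ A, spin (σ x)) * (∏ x ∈ A, spin (σ x)) = 1 := by
  rw [← Finset.prod_mul_distrib]
  exact Finset.prod_eq_one fun x _ => spin_mul_self (σ x)

lemma prodSpin_le_one (A : Finset V) (σ : V → Bool) : ∏ x ∈ A, spin (σ x) ≤ 1 := by
  rcases mul_self_eq_one_iff.mp (prodSpin_sq A σ) with h | h <;> rw [h] <;> norm_num

/-- `∑_σ σ_A ≥ 0` (it is `0` or `2^|V|`). -/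
lemma sum_prodSpin_nonneg (A : Finset V) :
    0 ≤ ∑ σ : V → Bool, ∏ x ∈ A, spin (σ x) := by
  have h1 : ∀ σ : V → Bool,
      (∏ x ∈ A, spin (σ x)) = ∏ x : V, (if x ∈ A then spin (σ x) else 1) := by
    intro σ
    rw [Finset.prod_ite_mem, Finset.univ_inter]
  calc (0:ℝ) ≤ ∏ x : V, ∑ b : Bool, (if x ∈ A then spin b else 1) := by
        refine Finset.prod_nonneg fun x _ => ?_
        by_cases hx : x ∈ A <;> simp [hx, spin]
    _ = ∑ σ ∈ Fintype.piFinset (fun _ : V => (Finset.univ : Finset Bool)),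
          ∏ x : V, (if x ∈ A then spin (σ x) else 1) := Finset.prod_univ_sum _ _
    _ = ∑ σ : V → Bool, ∏ x ∈ A, spin (σ x) := by
        rw [Fintype.piFinset_univ]
        exact Finset.sum_congr rfl fun σ _ => (h1 σ).symm

/-- Multiplying `σ_A` by a single spin gives `σ_B` for another set `B`. -/
lemma prodSpin_flip (A : Finset V) (x : V) :
    ∃ B : Finset V, ∀ τ : V → Bool,
      (∏ z ∈ B, spin (τ z)) = (∏ z ∈ A, spin (τ z)) * spin (τ x) := by
  by_cases hx : x ∈ A
  · refine ⟨A.erase x, fun τ => ?_⟩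
    have h := Finset.prod_erase_mul A (fun z => spin (τ z)) hx
    calc (∏ z ∈ A.erase x, spin (τ z))
        = (∏ z ∈ A.erase x, spin (τ z)) * (spin (τ x) * spin (τ x)) := by
          rw [spin_mul_self, mul_one]
      _ = (∏ z ∈ A, spin (τ z)) * spin (τ x) := by rw [← mul_assoc, h]
  · exact ⟨insert x A, fun τ => by rw [Finset.prod_insert hx, mul_comm]⟩

/-- Second key positivity: `∑_σ σ_A ∏_{e∈S} σ_e ≥ 0`. -/
lemma sum_prodSpin_sfun_nonneg (S : Finset (Sym2 V)) :
    ∀ A : Finset V, 0 ≤ ∑ σ : V → Bool, (∏ x ∈ A, spin (σ x)) * ∏ e ∈ S, sfun σ e := by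
  induction S using Finset.induction with
  | empty => intro A; simpa using sum_prodSpin_nonneg A
  | @insert e S he ih =>
    intro A
    simp only [Finset.prod_insert he]
    clear he
    induction e using Sym2.ind with
    | _ x y =>
      obtain ⟨B, hB⟩ := prodSpin_flip A x
      obtain ⟨C, hC⟩ := prodSpin_flip B y
      calc (0:ℝ) ≤ ∑ σ : V → Bool, (∏ z ∈ C, spin (σ z)) * ∏ e ∈ S, sfun σ e := ih C
        _ = ∑ σ : V → Bool,
              (∏ x_1 ∈ A, spin (σ x_1)) * (sfun σ s(x, y) * ∏ e ∈ S, sfun σ e) := by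
            refine Finset.sum_congr rfl fun σ _ => ?_
            rw [hC σ, hB σ, sfun_mk]
            ring

noncomputable def Pf (β₁ β₂ : ℝ) (ω : V → Bool) (e : Sym2 V) : ℝ :=
  Real.cosh β₂ * Real.cosh β₁ + Real.sinh β₂ * Real.sinh β₁ * sfun ω e

noncomputable def Qf (β₁ β₂ : ℝ) (ω : V → Bool) (e : Sym2 V) : ℝ :=
  Real.sinh β₂ * Real.cosh β₁ + Real.cosh β₂ * Real.sinh β₁ * sfun ω e

lemma sinh_nonneg' {x : ℝ} (hx : 0 ≤ x) : 0 ≤ Real.sinh x := by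
  rw [← Real.sinh_zero]
  exact Real.sinh_le_sinh.mpr hx

lemma Pf_nonneg {β₁ β₂ : ℝ} (h₁ : 0 ≤ β₁) (h₁₂ : β₁ ≤ β₂) (ω : V → Bool) (e : Sym2 V) :
    0 ≤ Pf β₁ β₂ ω e := by
  have h₂ : 0 ≤ β₂ := le_trans h₁ h₁₂
  rcases sfun_eq ω e with h | h <;> rw [Pf, h]
  · have := sinh_nonneg' h₁
    have := sinh_nonneg' h₂
    have := Real.cosh_pos β₁
    have := Real.cosh_pos β₂
    nlinarith
  · have hc := Real.cosh_pos (β₂ - β₁)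
    rw [Real.cosh_sub] at hc
    nlinarith

lemma Qf_nonneg {β₁ β₂ : ℝ} (h₁ : 0 ≤ β₁) (h₁₂ : β₁ ≤ β₂) (ω : V → Bool) (e : Sym2 V) :
    0 ≤ Qf β₁ β₂ ω e := by
  have h₂ : 0 ≤ β₂ := le_trans h₁ h₁₂
  rcases sfun_eq ω e with h | h <;> rw [Qf, h]
  · have := sinh_nonneg' h₁
    have := sinh_nonneg' h₂
    have := Real.cosh_pos β₁
    have := Real.cosh_pos β₂
    nlinarith
  · have hc := sinh_nonneg' (sub_nonneg.mpr h₁₂)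
    rw [Real.sinh_sub] at hc
    nlinarith

lemma exp_edge (β₁ β₂ : ℝ) (σ ω : V → Bool) (e : Sym2 V) :
    Real.exp (β₂ * sfun σ e + β₁ * (sfun σ e * sfun ω e)) =
      sfun σ e * Qf β₁ β₂ ω e + Pf β₁ β₂ ω e := by
  rcases sfun_eq σ e with ha | ha <;> rcases sfun_eq ω e with hw | hw <;>
    rw [Pf, Qf, ha, hw]
  · rw [show β₂ * (1:ℝ) + β₁ * (1 * 1) = β₂ + β₁ by ring, ← Real.cosh_add_sinh,
      Real.cosh_add, Real.sinh_add]
    ring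
  · rw [show β₂ * (1:ℝ) + β₁ * (1 * (-1)) = β₂ - β₁ by ring, ← Real.cosh_add_sinh,
      Real.cosh_sub, Real.sinh_sub]
    ring
  · rw [show β₂ * (-1:ℝ) + β₁ * ((-1) * 1) = -(β₂ + β₁) by ring, ← Real.cosh_sub_sinh,
      Real.cosh_add, Real.sinh_add]
    ring
  · rw [show β₂ * (-1:ℝ) + β₁ * ((-1) * (-1)) = -(β₂ - β₁) by ring, ← Real.cosh_sub_sinh,
      Real.cosh_sub, Real.sinh_sub]
    ring

/-- Flipping by a fixed `ω` via pointwise `==` is a self-inverse bijection. -/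
def beqEquiv (σ : V → Bool) : (V → Bool) ≃ (V → Bool) where
  toFun ω x := σ x == ω x
  invFun ω x := σ x == ω x
  left_inv ω := by
    funext x
    show (σ x == (σ x == ω x)) = ω x
    cases σ x <;> cases ω x <;> rfl
  right_inv ω := by
    funext x
    show (σ x == (σ x == ω x)) = ω x
    cases σ x <;> cases ω x <;> rfl

lemma inner_nonneg (G : SimpleGraph V) [DecidableRel G.Adj] (A : Finset V)
    {β₁ β₂ : ℝ} (h₁ : 0 ≤ β₁) (h₁₂ : β₁ ≤ β₂) (ω : V → Bool) :
    0 ≤ ∑ σ : V → Bool,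
      ((∏ x ∈ A, spin (σ x)) - ∏ x ∈ A, spin (σ x == ω x)) *
        (Real.exp (β₂ * interaction G σ) *
          Real.exp (β₁ * interaction G (fun x => σ x == ω x))) := by
  have hterm : ∀ σ : V → Bool,
      ((∏ x ∈ A, spin (σ x)) - ∏ x ∈ A, spin (σ x == ω x)) *
        (Real.exp (β₂ * interaction G σ) *
          Real.exp (β₁ * interaction G (fun x => σ x == ω x)))
      = (1 - ∏ x ∈ A, spin (ω x)) *
          ∑ t ∈ G.edgeFinset.powerset,
            ((∏ x ∈ A, spin (σ x)) * ∏ e ∈ t, sfun σ e) *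
              ((∏ e ∈ t, Qf β₁ β₂ ω e) * ∏ e ∈ G.edgeFinset \ t, Pf β₁ β₂ ω e) := by
    intro σ
    have h2 : (∏ x ∈ A, spin (σ x == ω x))
        = (∏ x ∈ A, spin (σ x)) * ∏ x ∈ A, spin (ω x) := by
      rw [← Finset.prod_mul_distrib]
      exact Finset.prod_congr rfl fun x _ => spin_beq _ _
    have h3 : Real.exp (β₂ * interaction G σ) *
          Real.exp (β₁ * interaction G (fun x => σ x == ω x))
        = ∏ e ∈ G.edgeFinset, (sfun σ e * Qf β₁ β₂ ω e + Pf β₁ β₂ ω e) := by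
      rw [← Real.exp_add, interaction_eq, interaction_eq, Finset.mul_sum, Finset.mul_sum,
        ← Finset.sum_add_distrib, Real.exp_sum]
      exact Finset.prod_congr rfl fun e _ => by rw [sfun_beq]; exact exp_edge β₁ β₂ σ ω e
    rw [h2, h3, Finset.prod_add, Finset.mul_sum, Finset.mul_sum]
    refine Finset.sum_congr rfl fun t ht => ?_
    rw [Finset.prod_mul_distrib]
    ring
  have hswap2 :
      ∑ σ : V → Bool, ∑ t ∈ G.edgeFinset.powerset,
          ((∏ x ∈ A, spin (σ x)) * ∏ e ∈ t, sfun σ e) *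
            ((∏ e ∈ t, Qf β₁ β₂ ω e) * ∏ e ∈ G.edgeFinset \ t, Pf β₁ β₂ ω e)
        = ∑ t ∈ G.edgeFinset.powerset,
          (∑ σ : V → Bool, (∏ x ∈ A, spin (σ x)) * ∏ e ∈ t, sfun σ e) *
            ((∏ e ∈ t, Qf β₁ β₂ ω e) * ∏ e ∈ G.edgeFinset \ t, Pf β₁ β₂ ω e) := by
    rw [Finset.sum_comm]
    exact Finset.sum_congr rfl fun t _ => (Finset.sum_mul _ _ _).symm
  calc (0:ℝ)
      ≤ (1 - ∏ x ∈ A, spin (ω x)) *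
          ∑ t ∈ G.edgeFinset.powerset,
            (∑ σ : V → Bool, (∏ x ∈ A, spin (σ x)) * ∏ e ∈ t, sfun σ e) *
              ((∏ e ∈ t, Qf β₁ β₂ ω e) * ∏ e ∈ G.edgeFinset \ t, Pf β₁ β₂ ω e) := by
        refine mul_nonneg (by linarith [prodSpin_le_one A ω])
          (Finset.sum_nonneg fun t _ => ?_)
        refine mul_nonneg (sum_prodSpin_sfun_nonneg t A) (mul_nonneg ?_ ?_)
        · exact Finset.prod_nonneg fun e _ => Qf_nonneg h₁ h₁₂ ω e
        · exact Finset.prod_nonneg fun e _ => Pf_nonneg h₁ h₁₂ ω e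
    _ = ∑ σ : V → Bool,
          (1 - ∏ x ∈ A, spin (ω x)) *
            ∑ t ∈ G.edgeFinset.powerset,
              ((∏ x ∈ A, spin (σ x)) * ∏ e ∈ t, sfun σ e) *
                ((∏ e ∈ t, Qf β₁ β₂ ω e) * ∏ e ∈ G.edgeFinset \ t, Pf β₁ β₂ ω e) := by
        rw [← hswap2, Finset.mul_sum]
    _ = ∑ σ : V → Bool,
          ((∏ x ∈ A, spin (σ x)) - ∏ x ∈ A, spin (σ x == ω x)) *
            (Real.exp (β₂ * interaction G σ) *
              Real.exp (β₁ * interaction G (fun x => σ x == ω x))) :=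
        Finset.sum_congr rfl fun σ _ => (hterm σ).symm

lemma key (G : SimpleGraph V) [DecidableRel G.Adj] (A : Finset V)
    {β₁ β₂ : ℝ} (h₁ : 0 ≤ β₁) (h₁₂ : β₁ ≤ β₂) :
    (∑ τ : V → Bool, (∏ x ∈ A, spin (τ x)) * Real.exp (β₁ * interaction G τ)) *
        (∑ σ : V → Bool, Real.exp (β₂ * interaction G σ)) ≤
      (∑ σ : V → Bool, (∏ x ∈ A, spin (σ x)) * Real.exp (β₂ * interaction G σ)) *
        (∑ τ : V → Bool, Real.exp (β₁ * interaction G τ)) := by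
  rw [← sub_nonneg]
  have hdiff :
      (∑ σ : V → Bool, (∏ x ∈ A, spin (σ x)) * Real.exp (β₂ * interaction G σ)) *
          (∑ τ : V → Bool, Real.exp (β₁ * interaction G τ)) -
        (∑ τ : V → Bool, (∏ x ∈ A, spin (τ x)) * Real.exp (β₁ * interaction G τ)) *
          (∑ σ : V → Bool, Real.exp (β₂ * interaction G σ))
      = ∑ σ : V → Bool, ∑ τ : V → Bool,
          ((∏ x ∈ A, spin (σ x)) - ∏ x ∈ A, spin (τ x)) *
            (Real.exp (β₂ * interaction G σ) * Real.exp (β₁ * interaction G τ)) := by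
    have expand1 :
        (∑ σ : V → Bool, (∏ x ∈ A, spin (σ x)) * Real.exp (β₂ * interaction G σ)) *
            (∑ τ : V → Bool, Real.exp (β₁ * interaction G τ))
          = ∑ σ : V → Bool, ∑ τ : V → Bool,
              ((∏ x ∈ A, spin (σ x)) * Real.exp (β₂ * interaction G σ)) *
                Real.exp (β₁ * interaction G τ) := Finset.sum_mul_sum _ _ _ _
    have expand2 :
        (∑ τ : V → Bool, (∏ x ∈ A, spin (τ x)) * Real.exp (β₁ * interaction G τ)) *
            (∑ σ : V → Bool, Real.exp (β₂ * interaction G σ))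
          = ∑ σ : V → Bool, ∑ τ : V → Bool,
              ((∏ x ∈ A, spin (τ x)) * Real.exp (β₁ * interaction G τ)) *
                Real.exp (β₂ * interaction G σ) := by
      rw [Finset.sum_mul_sum]
      exact Finset.sum_comm
    rw [expand1, expand2, ← Finset.sum_sub_distrib]
    refine Finset.sum_congr rfl fun σ _ => ?_
    rw [← Finset.sum_sub_distrib]
    exact Finset.sum_congr rfl fun τ _ => by ring
  rw [hdiff]
  have hre : ∀ σ : V → Bool,
      (∑ τ : V → Bool,
        ((∏ x ∈ A, spin (σ x)) - ∏ x ∈ A, spin (τ x)) *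
          (Real.exp (β₂ * interaction G σ) * Real.exp (β₁ * interaction G τ)))
      = ∑ ω : V → Bool,
        ((∏ x ∈ A, spin (σ x)) - ∏ x ∈ A, spin (σ x == ω x)) *
          (Real.exp (β₂ * interaction G σ) *
            Real.exp (β₁ * interaction G (fun x => σ x == ω x))) := by
    intro σ
    exact (Fintype.sum_equiv (beqEquiv σ)
      (fun ω => ((∏ x ∈ A, spin (σ x)) - ∏ x ∈ A, spin (σ x == ω x)) *
        (Real.exp (β₂ * interaction G σ) *
          Real.exp (β₁ * interaction G (fun x => σ x == ω x))))
      (fun τ => ((∏ x ∈ A, spin (σ x)) - ∏ x ∈ A, spin (τ x)) *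
        (Real.exp (β₂ * interaction G σ) * Real.exp (β₁ * interaction G τ)))
      (fun ω => rfl)).symm
  calc (0:ℝ)
      ≤ ∑ σ : V → Bool, ∑ ω : V → Bool,
          ((∏ x ∈ A, spin (σ x)) - ∏ x ∈ A, spin (σ x == ω x)) *
            (Real.exp (β₂ * interaction G σ) *
              Real.exp (β₁ * interaction G (fun x => σ x == ω x))) := by
        rw [Finset.sum_comm]
        exact Finset.sum_nonneg fun ω _ => inner_nonneg G A h₁ h₁₂ ω
    _ = ∑ σ : V → Bool, ∑ τ : V → Bool,
          ((∏ x ∈ A, spin (σ x)) - ∏ x ∈ A, spin (τ x)) *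
            (Real.exp (β₂ * interaction G σ) * Real.exp (β₁ * interaction G τ)) :=
        Finset.sum_congr rfl fun σ _ => (hre σ).symm

end IsingAux

/-- For the ferromagnetic Ising model with zero field on a finite graph, the spin
correlation `⟨σ_A⟩_β` is non-decreasing in the inverse temperature:
if `0 ≤ β₁ ≤ β₂` then `⟨σ_A⟩_{β₁} ≤ ⟨σ_A⟩_{β₂}`. -/
theorem isingCorrelation_monotone_beta {V : Type*} [Fintype V] [DecidableEq V]
    (G : SimpleGraph V) [DecidableRel G.Adj] (A : Finset V)
    (β₁ β₂ : ℝ) (h₁ : 0 ≤ β₁) (h₁₂ : β₁ ≤ β₂) :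
    isingExpect G β₁ (fun σ => ∏ x ∈ A, spin (σ x)) ≤
      isingExpect G β₂ (fun σ => ∏ x ∈ A, spin (σ x)) := by
  have Zpos : ∀ β : ℝ, 0 < ∑ σ : V → Bool, Real.exp (β * interaction G σ) :=
    fun β => Finset.sum_pos (fun σ _ => Real.exp_pos _) Finset.univ_nonempty
  rw [isingExpect, isingExpect, div_le_div_iff₀ (Zpos β₁) (Zpos β₂)]
  exact IsingAux.key G A h₁ h₁₂
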